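/- For GL_n, let ς be the map on W̃ = ℤ^n ⋊ W₀ defined by w₀φ^λ ↦ w_max w₀ w_max^{-1} φ^{−w_max λ}, where w_max is the longest element of W₀ = S_n. Then ς is a length-preserving group automorphism of W̃, and for every w ∈ W̃ one has LP(ς(w)) = w_max · LP(w) · w_max^{-1}. -/

import Mathlib

/-!
Conjugation by the longest element `w_max` reverses `Fin n`, so `ς` is a group automorphism and
an involution, and it preserves length because the reindexing `(i, j) ↦ (rev j, rev i)` of the
pairs `i < j` matches the summands of `ℓ(ς w)` with those of `ℓ(w)`.

For `LP`, the point is that the minimal representative `φ^μ y` of a coset `W₀ w` is unique. Its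
length is a sum over pairs `i < j` of `|d + 1|` if `(i, j)` is an inversion and `|d|` otherwise,
where `d = λ i - λ j`; the two values are never equal, and sorting the indices by decreasing `λ`
(ties by index) attains the smaller one for every pair at once. So a minimal `y` has exactly the
inversions `{(i, j) | λ i < λ j}`, which determine it. Hence `ς` carries the decomposition
`x φ^μ y` of `w` to the decomposition of `ς w`, and the defining inequalities of `LP` are carried
into each other by `v ↦ w_max v w_max⁻¹`.
-/

/-- The extended affine Weyl group of GL_n, encoded as pairs (u, lam) representing
u φ^lam, with multiplication (u φ^a)(v φ^b) = (uv) φ^{a∘v + b}. -/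
abbrev Wtilde (n : ℕ) := Equiv.Perm (Fin n) × (Fin n → ℤ)

def wmul {n : ℕ} (w w' : Wtilde n) : Wtilde n := (w.1 * w'.1, w.2 ∘ ⇑w'.1 + w'.2)

/-- ℓ(w₀ φ^λ) = Σ_{i<j, w₀(i)>w₀(j)} |λ(i)−λ(j)+1| + Σ_{i<j, w₀(i)<w₀(j)} |λ(i)−λ(j)|. -/
noncomputable def affLen {n : ℕ} (w : Wtilde n) : ℤ :=
  ∑ p ∈ Finset.univ.filter (fun p : Fin n × Fin n => p.1 < p.2),
    (if w.1 p.2 < w.1 p.1 then |w.2 p.1 - w.2 p.2 + 1| else |w.2 p.1 - w.2 p.2|)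

/-- ς : w₀ φ^λ ↦ w_max w₀ w_max⁻¹ φ^{−w_max λ}, where w_max is the longest element
(the order-reversing permutation) and (w_max λ)(i) = λ(w_max⁻¹ i) = λ(rev i). -/
def varsigma {n : ℕ} (w : Wtilde n) : Wtilde n :=
  (Fin.revPerm * w.1 * Fin.revPerm, fun i => - w.2 (Fin.rev i))

/-- The set of length positive elements associated to the decomposition x φ^μ y. -/
def LPset {n : ℕ} (x : Equiv.Perm (Fin n)) (μ : Fin n → ℤ) (y : Equiv.Perm (Fin n)) :
    Set (Equiv.Perm (Fin n)) :=
  {v | ∀ i j : Fin n, i < j →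
    (0 : ℤ) ≤ μ (y (v i)) - μ (y (v j)) + (if v i < v j then 1 else 0) -
      (if x (y (v i)) < x (y (v j)) then 1 else 0)}

/-- (x, μ, y) is the decomposition w = x φ^μ y with μ dominant and φ^μ y of minimal
length in W₀·(φ^μ y); note x φ^μ y = (x*y) φ^{μ∘y} and z·(φ^μ y) = (z*y) φ^{μ∘y}. -/
def IsMinDecomp {n : ℕ} (w : Wtilde n) (x : Equiv.Perm (Fin n)) (μ : Fin n → ℤ)
    (y : Equiv.Perm (Fin n)) : Prop :=
  (∀ i j : Fin n, i ≤ j → μ j ≤ μ i) ∧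
  (∀ z : Equiv.Perm (Fin n), affLen (y, μ ∘ ⇑y) ≤ affLen (z * y, μ ∘ ⇑y)) ∧
  w = (x * y, μ ∘ ⇑y)

open Equiv

variable {n : ℕ}

lemma revPerm_mul_revPerm : (Fin.revPerm : Perm (Fin n)) * Fin.revPerm = 1 := by
  ext; simp

lemma revPerm_conj_conj (u : Perm (Fin n)) :
    Fin.revPerm * (Fin.revPerm * u * Fin.revPerm) * Fin.revPerm = u := by
  simp only [← mul_assoc, revPerm_mul_revPerm, one_mul]
  rw [mul_assoc, revPerm_mul_revPerm, mul_one]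

lemma revPerm_conj_mul (u v : Perm (Fin n)) :
    Fin.revPerm * (u * v) * Fin.revPerm
      = (Fin.revPerm * u * Fin.revPerm) * (Fin.revPerm * v * Fin.revPerm) := by
  simp only [mul_assoc, ← mul_assoc Fin.revPerm Fin.revPerm, revPerm_mul_revPerm, one_mul]

lemma varsigma_wmul (w w' : Wtilde n) :
    varsigma (wmul w w') = wmul (varsigma w) (varsigma w') := by
  refine Prod.ext (revPerm_conj_mul _ _) (funext fun i => ?_)
  simp only [varsigma, wmul, Pi.add_apply, Function.comp_apply, Equiv.Perm.mul_apply,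
    Fin.revPerm_apply, Fin.rev_rev]
  ring

lemma varsigma_involutive : Function.Involutive (varsigma (n := n)) := fun w =>
  Prod.ext (revPerm_conj_conj w.1) (funext fun i => by simp [varsigma])

def affLenTerm (w : Wtilde n) (p : Fin n × Fin n) : ℤ :=
  if w.1 p.2 < w.1 p.1 then |w.2 p.1 - w.2 p.2 + 1| else |w.2 p.1 - w.2 p.2|

lemma affLen_eq_sum_affLenTerm (w : Wtilde n) :
    affLen w = ∑ p ∈ Finset.univ.filter (fun p : Fin n × Fin n => p.1 < p.2), affLenTerm w p :=
  rfl

lemma affLen_varsigma (w : Wtilde n) : affLen (varsigma w) = affLen w := by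
  simp only [affLen_eq_sum_affLenTerm]
  refine Finset.sum_nbij' (fun p => (Fin.rev p.2, Fin.rev p.1))
    (fun p => (Fin.rev p.2, Fin.rev p.1)) (by simp) (by simp) (by simp) (by simp) fun p _ => ?_
  simp only [affLenTerm, varsigma, Equiv.Perm.mul_apply, Fin.revPerm_apply,
    Fin.rev_lt_rev, neg_sub_neg]

lemma affLenTerm_le_of_inversion_iff {u₀ : Perm (Fin n)} (u : Perm (Fin n)) {lam : Fin n → ℤ}
    {p : Fin n × Fin n} (h₀ : u₀ p.2 < u₀ p.1 ↔ lam p.1 < lam p.2) :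
    affLenTerm (u₀, lam) p ≤ affLenTerm (u, lam) p := by
  have h1 := abs_cases (lam p.1 - lam p.2 + 1)
  have h2 := abs_cases (lam p.1 - lam p.2)
  unfold affLenTerm
  split_ifs <;> simp_all only [true_iff, false_iff, not_lt] <;> omega

lemma inversion_iff_of_affLenTerm_eq {u u' : Perm (Fin n)} {lam : Fin n → ℤ}
    {p : Fin n × Fin n} (h : affLenTerm (u, lam) p = affLenTerm (u', lam) p) :
    u p.2 < u p.1 ↔ u' p.2 < u' p.1 := by
  have h1 := abs_cases (lam p.1 - lam p.2 + 1)
  have h2 := abs_cases (lam p.1 - lam p.2)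
  unfold affLenTerm at h
  dsimp only at h
  -- on mismatched branches `h` says `|d + 1| = |d|`, impossible in `ℤ`
  split_ifs at h with hu hu' hu' <;> simp only [hu, hu'] <;> omega

lemma exists_perm_lt_iff_lt {α : Type*} [LinearOrder α] {f : Fin n → α}
    (hf : Function.Injective f) : ∃ σ : Perm (Fin n), ∀ i j, σ i < σ j ↔ f i < f j := by
  have hmono : StrictMono (f ∘ Tuple.sort f) :=
    (Tuple.monotone_sort f).strictMono_of_injective (hf.comp (Tuple.sort f).injective)
  refine ⟨(Tuple.sort f)⁻¹, fun i j => ?_⟩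
  simpa using (hmono.lt_iff_lt (a := (Tuple.sort f)⁻¹ i) (b := (Tuple.sort f)⁻¹ j)).symm

lemma exists_perm_inversion_iff (lam : Fin n → ℤ) :
    ∃ u₀ : Perm (Fin n), ∀ i j, i < j → (u₀ j < u₀ i ↔ lam i < lam j) := by
  obtain ⟨σ, hσ⟩ := exists_perm_lt_iff_lt (f := fun i => toLex (OrderDual.toDual (lam i), i))
    fun i j h => by simpa using congrArg (fun x => (ofLex x).2) h
  refine ⟨σ, fun i j hij => ?_⟩
  rw [hσ, Prod.Lex.toLex_lt_toLex]
  simp [hij.not_gt]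

lemma Equiv.Perm.eq_of_inversion_iff {α : Type*} [LinearOrder α] [Finite α] {σ τ : Perm α}
    (h : ∀ i j, i < j → (σ j < σ i ↔ τ j < τ i)) : σ = τ := by
  have hlt : ∀ i j, σ i < σ j ↔ τ i < τ j := by
    intro i j
    rcases lt_trichotomy i j with hij | rfl | hij
    · rw [← not_iff_not, not_lt, not_lt, le_iff_lt_or_eq, le_iff_lt_or_eq, h i j hij]
      simp [hij.ne']
    · simp
    · exact h j i hij
  have hmono : StrictMono (σ * τ⁻¹) := fun a b hab => by
    simpa [hlt] using hab
  exact Equiv.ext fun a => by simpa using congrFun hmono.eq_id (τ a)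

def IsMinInCoset (w : Wtilde n) : Prop := ∀ u : Perm (Fin n), affLen w ≤ affLen (u, w.2)

lemma IsMinInCoset.inversion_iff {y : Perm (Fin n)} {lam : Fin n → ℤ}
    (hy : IsMinInCoset (y, lam)) {i j : Fin n} (hij : i < j) : y j < y i ↔ lam i < lam j := by
  obtain ⟨u₀, hu₀⟩ := exists_perm_inversion_iff lam
  have hle : ∀ p ∈ Finset.univ.filter (fun p : Fin n × Fin n => p.1 < p.2),
      affLenTerm (u₀, lam) p ≤ affLenTerm (y, lam) p := fun p hp =>
    affLenTerm_le_of_inversion_iff y (hu₀ _ _ (Finset.mem_filter.1 hp).2)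
  have heq := (Finset.sum_eq_sum_iff_of_le hle).1 (le_antisymm (Finset.sum_le_sum hle) (hy u₀))
  rw [← hu₀ i j hij]
  exact (inversion_iff_of_affLenTerm_eq (heq (i, j) (by simpa using hij))).symm

lemma IsMinInCoset.unique {y y' : Perm (Fin n)} {lam : Fin n → ℤ}
    (hy : IsMinInCoset (y, lam)) (hy' : IsMinInCoset (y', lam)) : y = y' :=
  Perm.eq_of_inversion_iff fun _ _ hij => (hy.inversion_iff hij).trans (hy'.inversion_iff hij).symm

lemma IsMinInCoset.varsigma {w : Wtilde n} (hw : IsMinInCoset w) : IsMinInCoset (varsigma w) := by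
  intro u
  have := hw (Fin.revPerm * u * Fin.revPerm)
  rwa [← affLen_varsigma, ← affLen_varsigma (_, w.2), _root_.varsigma, _root_.varsigma,
    revPerm_conj_conj] at this

lemma IsMinDecomp.isMinInCoset {w : Wtilde n} {x : Perm (Fin n)} {μ : Fin n → ℤ}
    {y : Perm (Fin n)} (hd : IsMinDecomp w x μ y) : IsMinInCoset (y, μ ∘ y) := fun u => by
  simpa using hd.2.1 (u * y⁻¹)

lemma IsMinDecomp.varsigma_eq {w : Wtilde n} {x x' : Perm (Fin n)} {μ μ' : Fin n → ℤ}
    {y y' : Perm (Fin n)} (hd : IsMinDecomp w x μ y) (hd' : IsMinDecomp (varsigma w) x' μ' y') :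
    x' = Fin.revPerm * x * Fin.revPerm ∧ μ' = (fun i => -μ (Fin.rev i)) ∧
      y' = Fin.revPerm * y * Fin.revPerm := by
  have hw' : varsigma (x * y, μ ∘ y) = (x' * y', μ' ∘ y') := hd.2.2 ▸ hd'.2.2
  have hy : y' = Fin.revPerm * y * Fin.revPerm := by
    have hlam : (varsigma (x * y, μ ∘ y)).2 = μ' ∘ y' := congrArg Prod.snd hw'
    have hmin' := hd'.isMinInCoset
    rw [← hlam] at hmin'
    exact hmin'.unique hd.isMinInCoset.varsigma
  subst hy
  refine ⟨?_, funext fun k => ?_, rfl⟩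
  · have hx := congrArg Prod.fst hw'
    rw [varsigma, revPerm_conj_mul] at hx
    exact (mul_right_cancel hx).symm
  · simpa [varsigma] using (congrFun (congrArg Prod.snd hw') (Fin.rev (y⁻¹ (Fin.rev k)))).symm

lemma LPset_revPerm_conj (x : Perm (Fin n)) (μ : Fin n → ℤ) (y v : Perm (Fin n)) :
    v ∈ LPset (Fin.revPerm * x * Fin.revPerm) (fun i => -μ (Fin.rev i))
        (Fin.revPerm * y * Fin.revPerm) ↔ Fin.revPerm * v * Fin.revPerm ∈ LPset x μ y := by
  simp only [LPset, Set.mem_ofPred_eq, Equiv.Perm.mul_apply, Fin.revPerm_apply, Fin.rev_rev,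
    Fin.rev_lt_rev]
  refine ⟨fun h i j hij => ?_, fun h i j hij => ?_⟩
  · have := h (Fin.rev j) (Fin.rev i) (Fin.rev_lt_rev.2 hij)
    linarith
  · have := h (Fin.rev j) (Fin.rev i) (Fin.rev_lt_rev.2 hij)
    simp only [Fin.rev_rev] at this
    linarith

theorem stmt_12_general (n : ℕ) :
    (∀ w w' : Wtilde n, varsigma (wmul w w') = wmul (varsigma w) (varsigma w')) ∧
    Function.Bijective (varsigma (n := n)) ∧
    (∀ w : Wtilde n, affLen (varsigma w) = affLen w) ∧
    (∀ (w : Wtilde n) (x x' : Equiv.Perm (Fin n)) (μ μ' : Fin n → ℤ)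
        (y y' : Equiv.Perm (Fin n)),
      IsMinDecomp w x μ y → IsMinDecomp (varsigma w) x' μ' y' →
      LPset x' μ' y' =
        {v | ∃ u ∈ LPset x μ y, v = Fin.revPerm * u * Fin.revPerm}) := by
  refine ⟨varsigma_wmul, varsigma_involutive.bijective, affLen_varsigma, ?_⟩
  intro w x x' μ μ' y y' hd hd'
  obtain ⟨rfl, rfl, rfl⟩ := hd.varsigma_eq hd'
  ext v
  rw [LPset_revPerm_conj]
  exact ⟨fun hv => ⟨_, hv, (revPerm_conj_conj v).symm⟩,
    by rintro ⟨u, hu, rfl⟩; rwa [revPerm_conj_conj]⟩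

/-- ς is a length-preserving group automorphism of W̃, and
LP(ς(w)) = w_max · LP(w) · w_max⁻¹ for every w. -/
theorem stmt_12 (n : ℕ) (hn : 0 < n) :
    (∀ w w' : Wtilde n, varsigma (wmul w w') = wmul (varsigma w) (varsigma w')) ∧
    Function.Bijective (varsigma (n := n)) ∧
    (∀ w : Wtilde n, affLen (varsigma w) = affLen w) ∧
    (∀ (w : Wtilde n) (x x' : Equiv.Perm (Fin n)) (μ μ' : Fin n → ℤ)
        (y y' : Equiv.Perm (Fin n)),
      IsMinDecomp w x μ y → IsMinDecomp (varsigma w) x' μ' y' →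
      LPset x' μ' y' =
        {v | ∃ u ∈ LPset x μ y, v = Fin.revPerm * u * Fin.revPerm}) :=
  stmt_12_general n
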